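/- Under the same setup as the subsequence convergence theorem — X ∈ ℝ^{n×d}, L ∈ ℝ^{n×n} symmetric positive semidefinite, μ > 0 with Xᵀ L X ≠ 0, β > 0, f(W,H) = (1/2)‖X − X W H‖_F² + (μ/2)Tr(Wᵀ Xᵀ L X W), g_β(W) = β·Σ_i ‖W_{i·}‖₂, and sequences (W^k, H^k) with W^k ≥ 0 satisfying, for all k: W^{k+1} minimizes over W ≥ 0 the map W ↦ Tr(G_kᵀ(W − W^k)) + (L_w^k/2)‖W − W^k‖_F² + g_β(W) with G_k = Xᵀ(X W^k H^k − X)(H^k)ᵀ + μ Xᵀ L X W^k and L_w^k = ‖H^k(H^k)ᵀ‖₂‖XᵀX‖₂ + μ‖Xᵀ L X‖₂, and H^{k+1} minimizes H ↦ f(W^{k+1}, H) — the sequence {W^k} is bounded; in particular β·Σ_{i=1}^d ‖W^k_{i·}‖₂ ≤ f(W⁰,H⁰) + g_β(W⁰) for every k ≥ 0. -/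

import Mathlib

open scoped BigOperators
open Matrix Filter Topology

/-- Squared Frobenius norm of a matrix. -/
noncomputable def frobSq {m p : Type*} [Fintype m] [Fintype p]
    (A : Matrix m p ℝ) : ℝ :=
  ∑ i, ∑ j, (A i j) ^ 2

/-- Frobenius norm of a matrix. -/
noncomputable def frobNorm {m p : Type*} [Fintype m] [Fintype p]
    (A : Matrix m p ℝ) : ℝ :=
  Real.sqrt (frobSq A)

/-- Spectral norm (largest singular value) of a matrix: its operator norm as a
linear map between Euclidean spaces. -/
noncomputable def specNorm {m p : ℕ} (A : Matrix (Fin m) (Fin p) ℝ) : ℝ :=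
  ‖LinearMap.toContinuousLinearMap (Matrix.toEuclideanLin A)‖

/-- The smooth part of the GLoSS objective:
`f(W,H) = (1/2)‖X − XWH‖_F² + (μ/2)Tr(WᵀXᵀLXW)`. -/
noncomputable def fobj {n d K : ℕ} (X : Matrix (Fin n) (Fin d) ℝ)
    (L : Matrix (Fin n) (Fin n) ℝ) (μ : ℝ)
    (W : Matrix (Fin d) (Fin K) ℝ) (H : Matrix (Fin K) (Fin d) ℝ) : ℝ :=
  (1 / 2) * frobSq (X - X * W * H) + (μ / 2) * Matrix.trace (Wᵀ * Xᵀ * L * X * W)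

/-- The group-lasso regularizer `g_β(W) = β Σᵢ ‖Wᵢ·‖₂` (sum of Euclidean norms of rows). -/
noncomputable def gbeta {d K : ℕ} (β : ℝ) (W : Matrix (Fin d) (Fin K) ℝ) : ℝ :=
  β * ∑ i, Real.sqrt (∑ j, (W i j) ^ 2)

/-- The partial gradient `∇_W f(W,H) = Xᵀ(XWH − X)Hᵀ + μXᵀLXW`. -/
noncomputable def Gmat {n d K : ℕ} (X : Matrix (Fin n) (Fin d) ℝ)
    (L : Matrix (Fin n) (Fin n) ℝ) (μ : ℝ)
    (W : Matrix (Fin d) (Fin K) ℝ) (H : Matrix (Fin K) (Fin d) ℝ) :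
    Matrix (Fin d) (Fin K) ℝ :=
  Xᵀ * (X * W * H - X) * Hᵀ + μ • (Xᵀ * L * X * W)

/-- The Lipschitz constant `L_w = ‖HHᵀ‖₂‖XᵀX‖₂ + μ‖XᵀLX‖₂`. -/
noncomputable def Lw {n d K : ℕ} (X : Matrix (Fin n) (Fin d) ℝ)
    (L : Matrix (Fin n) (Fin n) ℝ) (μ : ℝ) (H : Matrix (Fin K) (Fin d) ℝ) : ℝ :=
  specNorm (H * Hᵀ) * specNorm (Xᵀ * X) + μ * specNorm (Xᵀ * L * X)

/-- The prox-linearized surrogate minimized at each `W`-update: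
`W' ↦ ⟨∇_W f(Wk,Hk), W' − Wk⟩ + (L_w/2)‖W' − Wk‖_F² + g_β(W')`. -/
noncomputable def Qsurr {n d K : ℕ} (X : Matrix (Fin n) (Fin d) ℝ)
    (L : Matrix (Fin n) (Fin n) ℝ) (μ β : ℝ)
    (Wk : Matrix (Fin d) (Fin K) ℝ) (Hk : Matrix (Fin K) (Fin d) ℝ)
    (W' : Matrix (Fin d) (Fin K) ℝ) : ℝ :=
  Matrix.trace ((Gmat X L μ Wk Hk)ᵀ * (W' - Wk)) +
    (Lw X L μ Hk / 2) * frobSq (W' - Wk) + gbeta β W'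

/-!
The `W`-update is a majorization step. `W ↦ f(W, H)` is a quadratic whose curvature is at most
`‖H‖₂²‖X‖₂² + μ‖XᵀLX‖₂ = L_w`, so its linearization at `Wᵏ` plus `(L_w/2)‖W − Wᵏ‖_F²` lies above
it; evaluating the surrogate at the feasible point `Wᵏ` and then minimizing in `H` shows that
`F = f + g_β` does not increase along the iterates. Since `L ⪰ 0` gives `f ≥ 0`, this bounds
`g_β(Wᵏ)` by `F(W⁰, H⁰)`, and `β‖W‖_F ≤ g_β(W)` bounds `Wᵏ`.
-/

section Frobenius

variable {m p : Type*} [Fintype m] [Fintype p]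

lemma trace_transpose_mul_eq_sum (A B : Matrix m p ℝ) :
    trace (Aᵀ * B) = ∑ i, ∑ j, A i j * B i j := by
  simp only [trace, diag, mul_apply, transpose_apply]
  exact Finset.sum_comm

lemma frobSq_eq_trace (A : Matrix m p ℝ) : frobSq A = trace (Aᵀ * A) := by
  simp only [frobSq, trace_transpose_mul_eq_sum, sq]

lemma frobSq_nonneg (A : Matrix m p ℝ) : 0 ≤ frobSq A := by
  unfold frobSq; positivity

lemma frobSq_transpose (A : Matrix m p ℝ) : frobSq Aᵀ = frobSq A :=
  Finset.sum_comm

lemma sq_trace_transpose_mul_le (A B : Matrix m p ℝ) :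
    trace (Aᵀ * B) ^ 2 ≤ frobSq A * frobSq B := by
  simpa only [trace_transpose_mul_eq_sum, frobSq, ← Fintype.sum_prod_type'] using
    Finset.sum_mul_sq_le_sq_mul_sq Finset.univ (fun x : m × p => A x.1 x.2)
      (fun x => B x.1 x.2)

lemma frobSq_sub (A B : Matrix m p ℝ) :
    frobSq (A - B) = frobSq A - 2 * trace (Aᵀ * B) + frobSq B := by
  have hBA : trace (Bᵀ * A) = trace (Aᵀ * B) := by
    rw [← trace_transpose, transpose_mul, transpose_transpose]
  simp only [frobSq_eq_trace, transpose_sub, Matrix.sub_mul, Matrix.mul_sub, trace_sub, hBA]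
  ring

lemma frobSq_eq_sum_norm_sq_col (A : Matrix m p ℝ) :
    frobSq A = ∑ j, ‖(EuclideanSpace.equiv m ℝ).symm (fun i => A i j)‖ ^ 2 := by
  rw [frobSq, Finset.sum_comm]
  simp [EuclideanSpace.norm_sq_eq]

end Frobenius

section L2OpNorm

open scoped Matrix.Norms.L2Operator

variable {m n p : Type*} [Fintype m] [Fintype n] [Fintype p] [DecidableEq n]

lemma frobSq_mul_le_left (A : Matrix m n ℝ) (B : Matrix n p ℝ) :
    frobSq (A * B) ≤ ‖A‖ ^ 2 * frobSq B := by
  rw [frobSq_eq_sum_norm_sq_col, frobSq_eq_sum_norm_sq_col, Finset.mul_sum]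
  gcongr with j
  rw [← mul_pow]
  gcongr
  exact A.l2_opNorm_mulVec ((EuclideanSpace.equiv n ℝ).symm fun k => B k j)

lemma l2_opNorm_transpose [DecidableEq m] (A : Matrix m n ℝ) : ‖Aᵀ‖ = ‖A‖ := by
  rw [← conjTranspose_eq_transpose_of_trivial, l2_opNorm_conjTranspose]

lemma l2_opNorm_transpose_mul_self (A : Matrix m n ℝ) : ‖Aᵀ * A‖ = ‖A‖ ^ 2 := by
  rw [← conjTranspose_eq_transpose_of_trivial, l2_opNorm_conjTranspose_mul_self, sq]

lemma l2_opNorm_mul_transpose_self [DecidableEq m] (A : Matrix m n ℝ) :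
    ‖A * Aᵀ‖ = ‖A‖ ^ 2 := by
  simpa only [transpose_transpose, l2_opNorm_transpose] using l2_opNorm_transpose_mul_self Aᵀ

lemma frobSq_mul_le_right [DecidableEq m] [DecidableEq p] (A : Matrix m n ℝ)
    (B : Matrix n p ℝ) :
    frobSq (A * B) ≤ ‖B‖ ^ 2 * frobSq A := by
  simpa only [← transpose_mul, frobSq_transpose, l2_opNorm_transpose] using
    frobSq_mul_le_left Bᵀ Aᵀ

lemma trace_transpose_mul_mul_le [DecidableEq m] (M : Matrix m m ℝ) (D : Matrix m p ℝ) :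
    trace (Dᵀ * M * D) ≤ ‖M‖ * frobSq D := by
  have hsq : trace (Dᵀ * (M * D)) ^ 2 ≤ (‖M‖ * frobSq D) ^ 2 :=
    calc trace (Dᵀ * (M * D)) ^ 2 ≤ frobSq D * frobSq (M * D) := sq_trace_transpose_mul_le _ _
      _ ≤ frobSq D * (‖M‖ ^ 2 * frobSq D) := by
        gcongr
        · exact frobSq_nonneg D
        · exact frobSq_mul_le_left M D
      _ = (‖M‖ * frobSq D) ^ 2 := by ring
  rw [Matrix.mul_assoc]
  exact (abs_le_of_sq_le_sq hsq (by positivity [frobSq_nonneg D])).trans' (le_abs_self _)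

lemma specNorm_eq_l2_opNorm {m p : ℕ} (A : Matrix (Fin m) (Fin p) ℝ) : specNorm A = ‖A‖ :=
  rfl

lemma Lw_eq {n d K : ℕ} (X : Matrix (Fin n) (Fin d) ℝ) (L : Matrix (Fin n) (Fin n) ℝ)
    (μ : ℝ) (H : Matrix (Fin K) (Fin d) ℝ) :
    Lw X L μ H = ‖H‖ ^ 2 * ‖X‖ ^ 2 + μ * ‖Xᵀ * L * X‖ := by
  simp only [Lw, specNorm_eq_l2_opNorm, l2_opNorm_mul_transpose_self, l2_opNorm_transpose_mul_self]

end L2OpNorm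

lemma Matrix.IsSymm.transpose_mul_mul {m n : Type*} [Fintype m] {L : Matrix m m ℝ}
    (hL : L.IsSymm) (X : Matrix m n ℝ) : (Xᵀ * L * X).IsSymm := by
  simp only [IsSymm, transpose_mul, transpose_transpose, hL.eq, Matrix.mul_assoc]

lemma Matrix.PosSemidef.isSymm {m : Type*} [Fintype m] {L : Matrix m m ℝ} (hL : L.PosSemidef) :
    L.IsSymm := by
  rw [IsSymm, ← conjTranspose_eq_transpose_of_trivial]
  exact hL.isHermitian

lemma trace_transpose_mul_mul_add {m p : Type*} [Fintype m] [Fintype p] {M : Matrix m m ℝ}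
    (hM : M.IsSymm) (W D : Matrix m p ℝ) :
    trace ((W + D)ᵀ * M * (W + D)) =
      trace (Wᵀ * M * W) + 2 * trace (Wᵀ * M * D) + trace (Dᵀ * M * D) := by
  have hDW : trace (Dᵀ * M * W) = trace (Wᵀ * M * D) := by
    rw [← trace_transpose, transpose_mul, transpose_mul, transpose_transpose, hM.eq,
      Matrix.mul_assoc]
  simp only [transpose_add, Matrix.add_mul, Matrix.mul_add, trace_add, hDW]
  ring

section Objective

open scoped Matrix.Norms.L2Operator

variable {n d K : ℕ} (X : Matrix (Fin n) (Fin d) ℝ) {L : Matrix (Fin n) (Fin n) ℝ}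
  (μ β : ℝ)

lemma fobj_eq (W : Matrix (Fin d) (Fin K) ℝ) (H : Matrix (Fin K) (Fin d) ℝ) :
    fobj X L μ W H =
      (1 / 2) * frobSq (X - X * W * H) + (μ / 2) * trace (Wᵀ * (Xᵀ * L * X) * W) := by
  simp only [fobj, Matrix.mul_assoc]

lemma trace_transpose_Gmat_mul (hL : L.IsSymm) (W D : Matrix (Fin d) (Fin K) ℝ)
    (H : Matrix (Fin K) (Fin d) ℝ) :
    trace ((Gmat X L μ W H)ᵀ * D) =
      -trace ((X - X * W * H)ᵀ * (X * D * H)) + μ * trace (Wᵀ * (Xᵀ * L * X) * D) := by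
  have hdata : trace ((Xᵀ * (X * W * H - X) * Hᵀ)ᵀ * D) =
      -trace ((X - X * W * H)ᵀ * (X * D * H)) := by
    rw [← neg_sub, Matrix.mul_neg, Matrix.neg_mul, transpose_neg, Matrix.neg_mul, trace_neg,
      transpose_mul, transpose_mul, transpose_transpose, transpose_transpose,
      Matrix.mul_assoc, trace_mul_comm]
    simp only [Matrix.mul_assoc]
  rw [Gmat, transpose_add, Matrix.add_mul, trace_add, hdata, transpose_smul, Matrix.smul_mul,
    trace_smul, transpose_mul, (hL.transpose_mul_mul X).eq, smul_eq_mul]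

lemma fobj_add (hL : L.IsSymm) (W D : Matrix (Fin d) (Fin K) ℝ) (H : Matrix (Fin K) (Fin d) ℝ) :
    fobj X L μ (W + D) H = fobj X L μ W H + trace ((Gmat X L μ W H)ᵀ * D)
      + (1 / 2) * frobSq (X * D * H) + (μ / 2) * trace (Dᵀ * (Xᵀ * L * X) * D) := by
  have hres : X - X * (W + D) * H = (X - X * W * H) - X * D * H := by
    rw [Matrix.mul_add, Matrix.add_mul]; abel
  rw [fobj_eq, fobj_eq, hres, frobSq_sub, trace_transpose_mul_mul_add (hL.transpose_mul_mul X),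
    trace_transpose_Gmat_mul X μ hL]
  ring

lemma fobj_le_linearization (hL : L.IsSymm) (hμ : 0 ≤ μ) (W W' : Matrix (Fin d) (Fin K) ℝ)
    (H : Matrix (Fin K) (Fin d) ℝ) :
    fobj X L μ W' H ≤ fobj X L μ W H + trace ((Gmat X L μ W H)ᵀ * (W' - W))
      + (Lw X L μ H / 2) * frobSq (W' - W) := by
  obtain ⟨D, rfl⟩ : ∃ D, W' = W + D := ⟨W' - W, (add_sub_cancel W W').symm⟩
  have hdata : frobSq (X * D * H) ≤ ‖H‖ ^ 2 * ‖X‖ ^ 2 * frobSq D :=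
    calc frobSq (X * D * H) ≤ ‖H‖ ^ 2 * frobSq (X * D) := frobSq_mul_le_right _ _
      _ ≤ ‖H‖ ^ 2 * (‖X‖ ^ 2 * frobSq D) := by gcongr; exact frobSq_mul_le_left _ _
      _ = ‖H‖ ^ 2 * ‖X‖ ^ 2 * frobSq D := by ring
  have hreg : μ * trace (Dᵀ * (Xᵀ * L * X) * D) ≤ μ * (‖Xᵀ * L * X‖ * frobSq D) :=
    mul_le_mul_of_nonneg_left (trace_transpose_mul_mul_le _ _) hμ
  rw [fobj_add X μ hL, Lw_eq, add_sub_cancel_left]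
  linarith

lemma fobj_nonneg (hL : L.PosSemidef) (hμ : 0 ≤ μ) (W : Matrix (Fin d) (Fin K) ℝ)
    (H : Matrix (Fin K) (Fin d) ℝ) : 0 ≤ fobj X L μ W H := by
  have hreg := (hL.conjTranspose_mul_mul_same (X * W)).trace_nonneg
  rw [conjTranspose_eq_transpose_of_trivial, transpose_mul] at hreg
  simp only [Matrix.mul_assoc] at hreg
  unfold fobj
  simp only [Matrix.mul_assoc]
  have := frobSq_nonneg (X - X * (W * H))
  positivity

lemma Qsurr_self (W : Matrix (Fin d) (Fin K) ℝ) (H : Matrix (Fin K) (Fin d) ℝ) :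
    Qsurr X L μ β W H W = gbeta β W := by
  simp [Qsurr, frobSq]

lemma fobj_add_gbeta_le_of_updates (hL : L.IsSymm) (hμ : 0 ≤ μ)
    {W W' : Matrix (Fin d) (Fin K) ℝ} {H H' : Matrix (Fin K) (Fin d) ℝ}
    (hW : Qsurr X L μ β W H W' ≤ Qsurr X L μ β W H W)
    (hH : fobj X L μ W' H' ≤ fobj X L μ W' H) :
    fobj X L μ W' H' + gbeta β W' ≤ fobj X L μ W H + gbeta β W := by
  have hdesc := fobj_le_linearization X μ hL hμ W W' H
  rw [Qsurr_self, Qsurr] at hW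
  linarith

end Objective

lemma frobNorm_le_sum_sqrt {m p : Type*} [Fintype m] [Fintype p] (A : Matrix m p ℝ) :
    frobNorm A ≤ ∑ i, √(∑ j, A i j ^ 2) := by
  rw [frobNorm, frobSq, Real.sqrt_le_left (by positivity)]
  calc ∑ i, ∑ j, A i j ^ 2 = ∑ i, √(∑ j, A i j ^ 2) ^ 2 := by
        congr! with i; rw [Real.sq_sqrt (by positivity)]
    _ ≤ (∑ i, √(∑ j, A i j ^ 2)) ^ 2 :=
        Finset.sum_sq_le_sq_sum_of_nonneg fun _ _ => Real.sqrt_nonneg _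

lemma mul_frobNorm_le_gbeta {d K : ℕ} {β : ℝ} (hβ : 0 ≤ β)
    (W : Matrix (Fin d) (Fin K) ℝ) :
    β * frobNorm W ≤ gbeta β W :=
  mul_le_mul_of_nonneg_left (frobNorm_le_sum_sqrt W) hβ

theorem gloss_iterates_bounded_general (n d K : ℕ)
    (X : Matrix (Fin n) (Fin d) ℝ) (L : Matrix (Fin n) (Fin n) ℝ)
    (hL : L.PosSemidef) (μ : ℝ) (hμ : 0 < μ)
    (β : ℝ) (hβ : 0 < β)
    (W : ℕ → Matrix (Fin d) (Fin K) ℝ) (H : ℕ → Matrix (Fin K) (Fin d) ℝ)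
    (hWnn : ∀ k, ∀ i j, 0 ≤ W k i j)
    (hWmin : ∀ k, ∀ W' : Matrix (Fin d) (Fin K) ℝ, (∀ i j, 0 ≤ W' i j) →
      Qsurr X L μ β (W k) (H k) (W (k + 1)) ≤ Qsurr X L μ β (W k) (H k) W')
    (hHmin : ∀ k, ∀ H' : Matrix (Fin K) (Fin d) ℝ,
      fobj X L μ (W (k + 1)) (H (k + 1)) ≤ fobj X L μ (W (k + 1)) H') :
    (∃ C : ℝ, ∀ k, frobNorm (W k) ≤ C) ∧
    (∀ k, gbeta β (W k) ≤ fobj X L μ (W 0) (H 0) + gbeta β (W 0)) := by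
  set F : ℕ → ℝ := fun k => fobj X L μ (W k) (H k) + gbeta β (W k)
  have hF : Antitone F := antitone_nat_of_succ_le fun k =>
    fobj_add_gbeta_le_of_updates X μ β hL.isSymm hμ.le (hWmin k (W k) (hWnn k)) (hHmin k (H k))
  have hg : ∀ k, gbeta β (W k) ≤ F 0 := fun k => by
    linarith [hF (Nat.zero_le k), fobj_nonneg X μ hL hμ.le (W k) (H k)]
  refine ⟨⟨F 0 / β, fun k => ?_⟩, hg⟩
  rw [le_div_iff₀' hβ]
  exact (mul_frobNorm_le_gbeta hβ.le (W k)).trans (hg k)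

/-- along the GLoSS block coordinate descent iterations (without
extrapolation), the sequence `{W^k}` is bounded (in the Frobenius norm); in
particular `g_β(W^k) = β Σᵢ ‖W^k_{i·}‖₂ ≤ f(W⁰,H⁰) + g_β(W⁰)` for every `k`. -/
theorem gloss_iterates_bounded (n d K : ℕ)
    (X : Matrix (Fin n) (Fin d) ℝ) (L : Matrix (Fin n) (Fin n) ℝ)
    (hL : L.PosSemidef) (μ : ℝ) (hμ : 0 < μ) (hXLX : Xᵀ * L * X ≠ 0)
    (β : ℝ) (hβ : 0 < β)
    (W : ℕ → Matrix (Fin d) (Fin K) ℝ) (H : ℕ → Matrix (Fin K) (Fin d) ℝ)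
    (hWnn : ∀ k, ∀ i j, 0 ≤ W k i j)
    (hWmin : ∀ k, ∀ W' : Matrix (Fin d) (Fin K) ℝ, (∀ i j, 0 ≤ W' i j) →
      Qsurr X L μ β (W k) (H k) (W (k + 1)) ≤ Qsurr X L μ β (W k) (H k) W')
    (hHmin : ∀ k, ∀ H' : Matrix (Fin K) (Fin d) ℝ,
      fobj X L μ (W (k + 1)) (H (k + 1)) ≤ fobj X L μ (W (k + 1)) H') :
    (∃ C : ℝ, ∀ k, frobNorm (W k) ≤ C) ∧
    (∀ k, gbeta β (W k) ≤ fobj X L μ (W 0) (H 0) + gbeta β (W 0)) :=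
  gloss_iterates_bounded_general n d K X L hL μ hμ β hβ W H hWnn hWmin hHmin
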